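/- Equivalence of natural deduction derivations and the derivability relation: Γ ⊢ φ in P (defined with weakening and cut as structural rules) if and only if there exists a finite sequence φ₁,…,φₙ with φₙ=φ where each φₖ is in Γ∪{⊤} or is obtained from earlier formulas by ∧-introduction, ∧-elimination, primal →-introduction, or →-elimination. In particular, the cut rule is admissible in the sequence-based system. -/

import Mathlib

/-- Infons: formulas built from atoms, ⊤, ⊥, conjunction and primal implication. -/
inductive Infon : Type
  | atom : ℕ → Infon
  | top : Infon
  | bot : Infon
  | and : Infon → Infon → Infon
  | imp : Infon → Infon → Infon
deriving DecidableEq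

/-- Derivability in the basic primal infon logic P (⊥ is an ordinary atom, no rule for it). -/
inductive DerP : Set Infon → Infon → Prop
  | top (Γ : Set Infon) : DerP Γ .top
  | id (φ : Infon) : DerP {φ} φ
  | weak {Γ φ} (Δ : Set Infon) : DerP Γ φ → DerP (Γ ∪ Δ) φ
  | cut {Γ φ ψ} : DerP Γ φ → DerP (insert φ Γ) ψ → DerP Γ ψ
  | andI {Γ φ ψ} : DerP Γ φ → DerP Γ ψ → DerP Γ (.and φ ψ)
  | andE1 {Γ φ ψ} : DerP Γ (.and φ ψ) → DerP Γ φ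
  | andE2 {Γ φ ψ} : DerP Γ (.and φ ψ) → DerP Γ ψ
  | impI {Γ ψ} (φ : Infon) : DerP Γ ψ → DerP Γ (.imp φ ψ)
  | impE {Γ φ ψ} : DerP Γ φ → DerP Γ (.imp φ ψ) → DerP Γ ψ

/-- Derivability in P[⊥_w]: P plus the weak ⊥-elimination rule. -/
inductive DerW : Set Infon → Infon → Prop
  | top (Γ : Set Infon) : DerW Γ .top
  | id (φ : Infon) : DerW {φ} φ
  | weak {Γ φ} (Δ : Set Infon) : DerW Γ φ → DerW (Γ ∪ Δ) φ
  | cut {Γ φ ψ} : DerW Γ φ → DerW (insert φ Γ) ψ → DerW Γ ψ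
  | andI {Γ φ ψ} : DerW Γ φ → DerW Γ ψ → DerW Γ (.and φ ψ)
  | andE1 {Γ φ ψ} : DerW Γ (.and φ ψ) → DerW Γ φ
  | andE2 {Γ φ ψ} : DerW Γ (.and φ ψ) → DerW Γ ψ
  | impI {Γ ψ} (φ : Infon) : DerW Γ ψ → DerW Γ (.imp φ ψ)
  | impE {Γ φ ψ} : DerW Γ φ → DerW Γ (.imp φ ψ) → DerW Γ ψ
  | botEw {Γ φ ψ} : DerW Γ .bot → DerW Γ (.imp φ ψ) → DerW Γ ψ

/-- Positive atoms of an infon. -/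
def posAt : Infon → Set Infon
  | .and φ ψ => posAt φ ∪ posAt ψ
  | .imp _ ψ => posAt ψ
  | φ => {φ}

/-- Positive atoms of a context. -/
def posCtx (Γ : Set Infon) : Set Infon := ⋃ φ ∈ Γ, posAt φ

/-- χ may occur as the next step of a derivation sequence from Γ given the list `pre` of
previously derived infons: it is a hypothesis, ⊤, or follows by ∧I, ∧E₁, ∧E₂, →I or →E. -/
def Step (Γ : Set Infon) (pre : List Infon) (χ : Infon) : Prop :=
  χ ∈ Γ ∨ χ = .top ∨
  (∃ φ ψ, χ = .and φ ψ ∧ φ ∈ pre ∧ ψ ∈ pre) ∨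
  (∃ ψ, .and χ ψ ∈ pre) ∨ (∃ φ, .and φ χ ∈ pre) ∨
  (∃ φ ψ, χ = .imp φ ψ ∧ ψ ∈ pre) ∨
  (∃ φ, φ ∈ pre ∧ .imp φ χ ∈ pre)

/-!
Derivation sequences are closed under all rules of P. Weakening is monotonicity of `Step` in
the hypotheses; cut is concatenation, because an entry of the second sequence justified as the
cut formula φ can be re-justified in the concatenation by the step that derived φ in the first
sequence (a step only looks at what precedes it, so it survives enlarging the prefix).
Conversely, every entry of a derivation sequence is P-derivable, by induction along the sequence.
-/

def IsDerivSeq (Γ : Set Infon) (L : List Infon) : Prop :=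
  ∀ i : Fin L.length, Step Γ (L.take i) (L.get i)

section Step

variable {Γ Δ : Set Infon} {pre pre' : List Infon} {χ : Infon}

theorem Step.hyp (h : χ ∈ Γ) : Step Γ pre χ := Or.inl h

theorem Step.top : Step Γ pre .top := Or.inr (Or.inl rfl)

theorem Step.andI {φ ψ : Infon} (hφ : φ ∈ pre) (hψ : ψ ∈ pre) : Step Γ pre (.and φ ψ) :=
  Or.inr (Or.inr (Or.inl ⟨φ, ψ, rfl, hφ, hψ⟩))

theorem Step.andE1 {ψ : Infon} (h : .and χ ψ ∈ pre) : Step Γ pre χ :=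
  Or.inr (Or.inr (Or.inr (Or.inl ⟨ψ, h⟩)))

theorem Step.andE2 {φ : Infon} (h : .and φ χ ∈ pre) : Step Γ pre χ :=
  Or.inr (Or.inr (Or.inr (Or.inr (Or.inl ⟨φ, h⟩))))

theorem Step.impI (φ : Infon) {ψ : Infon} (h : ψ ∈ pre) : Step Γ pre (.imp φ ψ) :=
  Or.inr (Or.inr (Or.inr (Or.inr (Or.inr (Or.inl ⟨φ, ψ, rfl, h⟩)))))

theorem Step.impE {φ : Infon} (hφ : φ ∈ pre) (h : .imp φ χ ∈ pre) : Step Γ pre χ :=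
  Or.inr (Or.inr (Or.inr (Or.inr (Or.inr (Or.inr ⟨φ, hφ, h⟩)))))

theorem Step.of_forall_mem_step (h : Step Δ pre χ) (hpre : pre ⊆ pre')
    (hΔ : ∀ x ∈ Δ, Step Γ pre' x) : Step Γ pre' χ := by
  rcases h with h | rfl | ⟨a, b, rfl, ha, hb⟩ | ⟨b, hb⟩ | ⟨a, ha⟩ | ⟨a, b, rfl, hb⟩ | ⟨a, ha, hb⟩
  · exact hΔ χ h
  · exact .top
  · exact .andI (hpre ha) (hpre hb)
  · exact .andE1 (hpre hb)
  · exact .andE2 (hpre ha)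
  · exact .impI a (hpre hb)
  · exact .impE (hpre ha) (hpre hb)

theorem Step.mono (h : Step Γ pre χ) (hΓ : Γ ⊆ Δ) (hpre : pre ⊆ pre') : Step Δ pre' χ :=
  h.of_forall_mem_step hpre fun _ hx => .hyp (hΓ hx)

theorem DerP.of_mem (h : χ ∈ Γ) : DerP Γ χ := by
  simpa [Set.insert_eq_of_mem h] using DerP.weak Γ (DerP.id χ)

theorem DerP.of_step (h : Step Γ pre χ) (hpre : ∀ x ∈ pre, DerP Γ x) : DerP Γ χ := by
  rcases h with h | rfl | ⟨a, b, rfl, ha, hb⟩ | ⟨b, hb⟩ | ⟨a, ha⟩ | ⟨a, b, rfl, hb⟩ | ⟨a, ha, hb⟩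
  · exact .of_mem h
  · exact .top Γ
  · exact .andI (hpre a ha) (hpre b hb)
  · exact .andE1 (hpre _ hb)
  · exact .andE2 (hpre _ ha)
  · exact .impI a (hpre b hb)
  · exact .impE (hpre a ha) (hpre _ hb)

end Step

namespace IsDerivSeq

variable {Γ Δ : Set Infon} {L L₁ L₂ : List Infon} {χ : Infon}

theorem nil : IsDerivSeq Γ [] := fun i => i.elim0

theorem concat_iff : IsDerivSeq Γ (L ++ [χ]) ↔ IsDerivSeq Γ L ∧ Step Γ L χ := by
  constructor
  · intro h
    refine ⟨fun ⟨i, hi⟩ => ?_, by simpa using h ⟨L.length, by simp⟩⟩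
    simpa [List.take_append_of_le_length hi.le, List.getElem_append_left hi] using
      h ⟨i, by simp; omega⟩
  · rintro ⟨hL, hχ⟩ ⟨i, hi⟩
    rw [List.length_append, List.length_singleton] at hi
    rcases Nat.lt_succ_iff_lt_or_eq.1 hi with hi | rfl
    · simpa [List.take_append_of_le_length hi.le, List.getElem_append_left hi] using hL ⟨i, hi⟩
    · simpa using hχ

theorem concat (h : IsDerivSeq Γ L) (hχ : Step Γ L χ) : IsDerivSeq Γ (L ++ [χ]) :=
  concat_iff.2 ⟨h, hχ⟩

theorem mono (h : IsDerivSeq Γ L) (hΓ : Γ ⊆ Δ) : IsDerivSeq Δ L :=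
  fun i => (h i).mono hΓ (List.Subset.refl _)

theorem step_of_mem (h : IsDerivSeq Γ L) (hχ : χ ∈ L) : Step Γ L χ := by
  obtain ⟨i, hi, rfl⟩ := List.getElem_of_mem hχ
  exact (h ⟨i, hi⟩).mono subset_rfl (List.take_subset i L)

theorem append (h₁ : IsDerivSeq Γ L₁) (h₂ : IsDerivSeq Δ L₂) (hΔ : ∀ x ∈ Δ, x ∈ Γ ∨ x ∈ L₁) :
    IsDerivSeq Γ (L₁ ++ L₂) := by
  induction L₂ using List.reverseRecOn with
  | nil => simpa using h₁
  | append_singleton M χ ih =>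
    obtain ⟨hM, hχ⟩ := concat_iff.1 h₂
    rw [← List.append_assoc]
    refine (ih hM).concat (hχ.of_forall_mem_step (List.subset_append_right _ _) fun x hx => ?_)
    rcases hΔ x hx with hxΓ | hxL₁
    · exact Or.inl hxΓ
    · exact (h₁.step_of_mem hxL₁).mono subset_rfl (List.subset_append_left _ _)

theorem exists_getLast?_of_step (h : IsDerivSeq Γ L) (hχ : Step Γ L χ) :
    ∃ L', IsDerivSeq Γ L' ∧ L'.getLast? = some χ :=
  ⟨L ++ [χ], h.concat hχ, List.getLast?_concat⟩

theorem derP_of_mem (h : IsDerivSeq Γ L) (hχ : χ ∈ L) : DerP Γ χ := by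
  induction L using List.reverseRecOn generalizing χ with
  | nil => simp at hχ
  | append_singleton M ψ ih =>
    obtain ⟨hM, hψ⟩ := concat_iff.1 h
    rcases List.mem_append.1 hχ with hχM | hχψ
    · exact ih hM hχM
    · rw [List.mem_singleton.1 hχψ]
      exact .of_step hψ fun x hx => ih hM hx

end IsDerivSeq

theorem DerP.exists_isDerivSeq {Γ : Set Infon} {φ : Infon} (h : DerP Γ φ) :
    ∃ L, IsDerivSeq Γ L ∧ L.getLast? = some φ := by
  induction h with
  | top Γ => exact IsDerivSeq.nil.exists_getLast?_of_step .top
  | id φ => exact IsDerivSeq.nil.exists_getLast?_of_step (.hyp rfl)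
  | weak Δ _ ih =>
    obtain ⟨L, hL, hφ⟩ := ih
    exact ⟨L, hL.mono Set.subset_union_left, hφ⟩
  | cut _ _ ih₁ ih₂ =>
    obtain ⟨L₁, h₁, hφ⟩ := ih₁
    obtain ⟨L₂, h₂, hψ⟩ := ih₂
    refine ⟨L₁ ++ L₂, h₁.append h₂ ?_, by simp [List.getLast?_append, hψ]⟩
    rintro x (rfl | hx)
    exacts [Or.inr (List.mem_of_getLast? hφ), Or.inl hx]
  | andI _ _ ih₁ ih₂ =>
    obtain ⟨L₁, h₁, hφ⟩ := ih₁
    obtain ⟨L₂, h₂, hψ⟩ := ih₂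
    exact (h₁.append h₂ fun x hx => Or.inl hx).exists_getLast?_of_step
      (.andI (List.mem_append_left L₂ (List.mem_of_getLast? hφ))
        (List.mem_append_right L₁ (List.mem_of_getLast? hψ)))
  | andE1 _ ih =>
    obtain ⟨L, hL, hφ⟩ := ih
    exact hL.exists_getLast?_of_step (.andE1 (List.mem_of_getLast? hφ))
  | andE2 _ ih =>
    obtain ⟨L, hL, hφ⟩ := ih
    exact hL.exists_getLast?_of_step (.andE2 (List.mem_of_getLast? hφ))
  | impI φ _ ih =>
    obtain ⟨L, hL, hψ⟩ := ih
    exact hL.exists_getLast?_of_step (.impI φ (List.mem_of_getLast? hψ))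
  | impE _ _ ih₁ ih₂ =>
    obtain ⟨L₁, h₁, hφ⟩ := ih₁
    obtain ⟨L₂, h₂, hψ⟩ := ih₂
    exact (h₁.append h₂ fun x hx => Or.inl hx).exists_getLast?_of_step
      (.impE (List.mem_append_left L₂ (List.mem_of_getLast? hφ))
        (List.mem_append_right L₁ (List.mem_of_getLast? hψ)))

/-- Γ ⊢ φ in P (with weakening and cut) iff there is a derivation sequence of φ from Γ,
where each entry is a hypothesis, ⊤, or follows from earlier entries by the ∧- and
primal →-rules. In particular, cut is admissible in the sequence-based system. -/
theorem derP_iff_derivation_sequence (Γ : Set Infon) (φ : Infon) :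
    DerP Γ φ ↔
    ∃ L : List Infon,
      (∀ i : Fin L.length, Step Γ (L.take i) (L.get i)) ∧
      L.getLast? = some φ :=
  ⟨DerP.exists_isDerivSeq, fun ⟨_, hL, hφ⟩ => IsDerivSeq.derP_of_mem hL (List.mem_of_getLast? hφ)⟩
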